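/- Let X be a ℤ²-subshift that is polygonal with coding polygon P, and let ℓ be a nonexpansive ray for X that is positively parallel to an oriented edge of P. Then ℓ is closing for X. -/

import Mathlib

/-!
Write the edge of `P` parallel to `v` as `P.vert (i + 1) - P.vert i = c • v` with `c > 0`.
Translating `P` so that an endpoint of this edge sits at a lattice point `p` of `L₀` puts the
rest of `P` into `H_v`, except for the edge itself, which lies on `L₀`; there are no lattice
points strictly between `L₀` and the boundary of `H_v`. The coding property at `P.vert i`
therefore says that `H_v` and the `c` points of `L₀` following `p` code `p`, and at
`P.vert (i + 1)` that `H_v` and the `c` points preceding `p` code `p`. Starting from a block of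
at least `c` consecutive points, these two steps fill in all of `L₀`.
-/

namespace PolygonalShifts

abbrev Z2 : Type := ℤ × ℤ

abbrev Config (A : Type*) : Type _ := Z2 → A

/-- The translation action of `ℤ²` on configurations. -/
def shiftAct {A : Type*} (u : Z2) (x : Config A) : Config A := fun w => x (u + w)

/-- A `ℤ²`-subshift: a closed (for the product topology, with the alphabet discrete)
and translation-invariant set of configurations. -/
def IsSubshift {A : Type*} (X : Set (Config A)) : Prop :=
  (letI : TopologicalSpace A := ⊥
   IsClosed X) ∧
  ∀ u : Z2, ∀ x ∈ X, shiftAct u x ∈ X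

/-- The canonical embedding `ℤ² → ℝ²`. -/
def toR2 (p : Z2) : ℝ × ℝ := ((p.1 : ℝ), (p.2 : ℝ))

/-- `S` X-codes `S'`, for subsets `S, S'` of `ℝ²`. -/
def Codes {A : Type*} (X : Set (Config A)) (S S' : Set (ℝ × ℝ)) : Prop :=
  ∀ x ∈ X, ∀ x' ∈ X,
    (∀ p : Z2, toR2 p ∈ S → x p = x' p) →
    ∀ p : Z2, toR2 p ∈ S' → x p = x' p

/-- `S` X-codes `S'`, for subsets `S, S'` of `ℤ²`. -/
def CodesZ {A : Type*} (X : Set (Config A)) (S S' : Set Z2) : Prop :=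
  ∀ x ∈ X, ∀ x' ∈ X, (∀ p ∈ S, x p = x' p) → ∀ p ∈ S', x p = x' p

/-- `Y` is a recoding of `X` via the finite set `F ⊆ ℤ²`. -/
def IsRecodingVia {A A' : Type*} (X : Set (Config A)) (Y : Set (Config A'))
    (F : Set Z2) : Prop :=
  letI : TopologicalSpace A := ⊥
  letI : TopologicalSpace A' := ⊥
  ∃ Ψ : X ≃ₜ Y,
    (∀ (u : Z2) (x x' : X), (x' : Config A) = shiftAct u (x : Config A) →
      (↑(Ψ x') : Config A') = shiftAct u (↑(Ψ x) : Config A')) ∧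
    (∀ (u : Z2) (x x' : X),
      (↑(Ψ x) : Config A') u = (↑(Ψ x') : Config A') u ↔
        ∀ f ∈ F, (x : Config A) (f + u) = (x' : Config A) (f + u))

/-- `Y` is a recoding of `X`. -/
def IsRecoding {A A' : Type*} (X : Set (Config A)) (Y : Set (Config A')) : Prop :=
  ∃ F : Set Z2, F.Finite ∧ IsRecodingVia X Y F

/-- Integer cross product. -/
def crossZ (u v : Z2) : ℤ := u.1 * v.2 - u.2 * v.1

/-- Real cross product. -/
def crossR (u v : ℝ × ℝ) : ℝ := u.1 * v.2 - u.2 * v.1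

/-- A convex integer polygon, given by its (at least three) vertices listed in
counterclockwise order: every vertex lies strictly to the left of every directed edge. -/
structure IntPolygon where
  n : ℕ
  vert : Fin (n + 3) → Z2
  convex : ∀ i j : Fin (n + 3), j ≠ i → j ≠ i + 1 →
    0 < crossZ (vert (i + 1) - vert i) (vert j - vert i)

namespace IntPolygon

/-- The oriented edge vector from vertex `i` to vertex `i+1`. -/
def edgeVec (P : IntPolygon) (i : Fin (P.n + 3)) : Z2 := P.vert (i + 1) - P.vert i

/-- The polygon as a subset of `ℝ²` (the convex hull of its vertices). -/
def carrier (P : IntPolygon) : Set (ℝ × ℝ) :=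
  convexHull ℝ (Set.range fun i => toR2 (P.vert i))

lemma crossZ_smul (m : ℤ) (u v : Z2) : crossZ (m • u) (m • v) = m ^ 2 * crossZ u v := by
  simp only [crossZ, Prod.smul_fst, Prod.smul_snd, smul_eq_mul]
  ring

/-- The dilation of a polygon by a positive integer factor about the origin. -/
def dilate (P : IntPolygon) (m : ℤ) (hm : 0 < m) : IntPolygon where
  n := P.n
  vert := fun i => m • P.vert i
  convex := by
    intro i j hj hj1
    have h := P.convex i j hj hj1
    have e1 : m • P.vert (i + 1) - m • P.vert i = m • (P.vert (i + 1) - P.vert i) :=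
      (smul_sub m _ _).symm
    have e2 : m • P.vert j - m • P.vert i = m • (P.vert j - P.vert i) :=
      (smul_sub m _ _).symm
    rw [e1, e2, crossZ_smul]
    exact mul_pos (pow_pos hm 2) h

end IntPolygon

/-- `P` is a coding polygon for `X`: for each vertex `w`, the polygon with `w`
removed X-codes `w`. -/
def IsCodingPolygon {A : Type*} (X : Set (Config A)) (P : IntPolygon) : Prop :=
  ∀ i : Fin (P.n + 3),
    Codes X (P.carrier \ {toR2 (P.vert i)}) {toR2 (P.vert i)}

/-- `X` is polygonal with respect to `P`. -/
def Polygonal {A : Type*} (X : Set (Config A)) (P : IntPolygon) : Prop :=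
  X.Infinite ∧ IsCodingPolygon X P

/-- The closed half plane `H_v = {w : v₁ w₂ − v₂ w₁ ≥ 0}` to the left of the direction `v`. -/
def leftHalfPlane (v : ℝ × ℝ) : Set (ℝ × ℝ) := {w | 0 ≤ v.1 * w.2 - v.2 * w.1}

/-- The ray directed by `v` is expansive for `X`: `H_v` X-codes all of `ℝ²`. -/
def ExpansiveRay {A : Type*} (X : Set (Config A)) (v : ℝ × ℝ) : Prop :=
  Codes X (leftHalfPlane v) Set.univ

/-- For a primitive integer direction `v`, the line `L₀`: the translate of `L = ℝ·v`
by an integer vector, lying outside `H_v` and closest to `L`. -/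
def lineL0 (v : Z2) : Set (ℝ × ℝ) := {w | (v.1 : ℝ) * w.2 - (v.2 : ℝ) * w.1 = -1}

/-- A block of `m` consecutive lattice points on `L₀`, starting at `z`. -/
def blockOn (v z : Z2) (m : ℕ) : Set (ℝ × ℝ) :=
  (fun k : ℕ => toR2 (z + (k : ℤ) • v)) '' {k | k < m}

/-- The (nonexpansive) rational ray directed by the primitive vector `v` is closing for `X`. -/
def ClosingRay {A : Type*} (X : Set (Config A)) (v : Z2) : Prop :=
  ∃ N : ℕ, ∀ z : Z2, v.1 * z.2 - v.2 * z.1 = -1 →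
    ∀ m : ℕ, N ≤ m →
      Codes X (leftHalfPlane (toR2 v) ∪ blockOn v z m) (lineL0 v)

/-- The sector (with vertex the origin) determined by the rays through `e₁` and `e₂`:
lattice points on either ray or strictly between them. -/
def SectorZ (e₁ e₂ : Z2) : Set Z2 :=
  {p | SameRay ℝ (toR2 e₁) (toR2 p) ∨ SameRay ℝ (toR2 e₂) (toR2 p) ∨
       (0 < crossZ e₁ p ∧ 0 < crossZ p e₂)}

/-- The rational sector determined by `(e₁, e₂)` is corner coding for `X`. -/
def IsCornerCoding {A : Type*} (X : Set (Config A)) (e₁ e₂ : Z2) : Prop :=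
  CodesZ X (SectorZ e₁ e₂ \ {0}) {0}

/-- The rational sector determined by `(e₁, e₂)` is weakly corner coding for `X`. -/
def IsWeaklyCornerCoding {A : Type*} (X : Set (Config A)) (e₁ e₂ : Z2) : Prop :=
  ∃ F₀ : Set Z2, F₀.Finite ∧ F₀ ⊆ SectorZ e₁ e₂ ∧
    ∀ F : Set Z2, F.Finite → F ⊆ SectorZ e₁ e₂ →
      CodesZ X (SectorZ e₁ e₂ \ F) (SectorZ e₁ e₂ \ F₀)

/-- The sector based at the vertex `i` of the polygon `P`: lattice points in the convex
cone with apex `P.vert i` spanned by the two edges of `P` incident to that vertex. -/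
def vertexSector (P : IntPolygon) (i : Fin (P.n + 3)) : Set Z2 :=
  {p | ∃ s t : ℝ, 0 ≤ s ∧ 0 ≤ t ∧
    toR2 p = toR2 (P.vert i) + s • toR2 (P.vert (i - 1) - P.vert i)
      + t • toR2 (P.vert (i + 1) - P.vert i)}

/-- `P` is a coding polygon for some recoding of `X`. -/
def HasRecodingPolygon {A : Type*} (X : Set (Config A)) (P : IntPolygon) : Prop :=
  ∃ (A' : Type) (_ : Fintype A') (Y : Set (Config A')),
    IsSubshift Y ∧ IsRecoding X Y ∧ IsCodingPolygon Y P

/-- `P` is a minimal recoding polygon for `X`. -/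
def IsMinimalRecodingPolygon {A : Type*} (X : Set (Config A)) (P : IntPolygon) : Prop :=
  HasRecodingPolygon X P ∧
  (∀ Q : IntPolygon, HasRecodingPolygon X Q → P.n ≤ Q.n) ∧
  (∀ Q : IntPolygon, HasRecodingPolygon X Q → Q.n = P.n →
    Q.carrier ⊆ P.carrier → Q.carrier = P.carrier)

open Pointwise

lemma toR2_injective : Function.Injective toR2 := fun p q h => by
  simpa [toR2, Prod.ext_iff] using h

lemma toR2_zsmul (k : ℤ) (p : Z2) : toR2 (k • p) = (k : ℝ) • toR2 p := by
  simp [toR2]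

lemma toR2_sub (p q : Z2) : toR2 (p - q) = toR2 p - toR2 q := by
  simp [toR2]

lemma crossR_toR2 (u w : Z2) : crossR (toR2 u) (toR2 w) = crossZ u w := by
  simp [crossR, crossZ, toR2]

section crossZ

variable (u w w' : Z2) (k : ℤ)

lemma crossZ_add_right : crossZ u (w + w') = crossZ u w + crossZ u w' := by
  simp only [crossZ, Prod.fst_add, Prod.snd_add]; ring

lemma crossZ_sub_right : crossZ u (w - w') = crossZ u w - crossZ u w' := by
  simp only [crossZ, Prod.fst_sub, Prod.snd_sub]; ring

lemma crossZ_zsmul_left : crossZ (k • u) w = k * crossZ u w := by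
  simp only [crossZ, Prod.smul_fst, Prod.smul_snd, smul_eq_mul]; ring

lemma crossZ_zsmul_right : crossZ u (k • w) = k * crossZ u w := by
  simp only [crossZ, Prod.smul_fst, Prod.smul_snd, smul_eq_mul]; ring

lemma crossZ_neg_right : crossZ u (-w) = -crossZ u w := by
  simp only [crossZ, Prod.fst_neg, Prod.snd_neg]; ring

lemma crossZ_comm : crossZ w u = -crossZ u w := by
  simp only [crossZ]; ring

lemma crossZ_self : crossZ u u = 0 := by
  simp only [crossZ]; ring

lemma crossZ_zero_left : crossZ 0 w = 0 := by
  simp [crossZ]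

end crossZ

lemma exists_eq_zsmul_of_crossZ_eq_zero {v d : Z2} (hv : Int.gcd v.1 v.2 = 1)
    (h : crossZ v d = 0) : ∃ k : ℤ, d = k • v := by
  have hab : v.1 * Int.gcdA v.1 v.2 + v.2 * Int.gcdB v.1 v.2 = 1 := by
    rw [← Int.gcd_eq_gcd_ab, hv, Nat.cast_one]
  have h' : v.1 * d.2 - v.2 * d.1 = 0 := h
  refine ⟨Int.gcdA v.1 v.2 * d.1 + Int.gcdB v.1 v.2 * d.2, Prod.ext ?_ ?_⟩ <;>
    simp only [Prod.smul_fst, Prod.smul_snd, smul_eq_mul]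
  · linear_combination -d.1 * hab - Int.gcdB v.1 v.2 * h'
  · linear_combination -d.2 * hab + Int.gcdA v.1 v.2 * h'

lemma exists_pos_zsmul_of_sameRay {v e : Z2} (hv : Int.gcd v.1 v.2 = 1) (he : e ≠ 0)
    (h : SameRay ℝ (toR2 e) (toR2 v)) : ∃ c : ℤ, 0 < c ∧ e = c • v := by
  have hv0 : toR2 v ≠ 0 := by
    rintro hv0
    simp [toR2, Prod.ext_iff] at hv0
    simp [hv0] at hv
  obtain ⟨r, -, hr⟩ := h.exists_pos_right (by simpa [toR2, Prod.ext_iff] using he) hv0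
  have hcross : crossZ v e = 0 := by
    have : crossR (toR2 v) (toR2 e) = r * crossR (toR2 v) (toR2 v) := by
      rw [hr]; simp only [crossR, Prod.smul_fst, Prod.smul_snd, smul_eq_mul]; ring
    rw [crossR_toR2, crossR_toR2, crossZ_self, Int.cast_zero, mul_zero] at this
    exact_mod_cast this
  obtain ⟨c, rfl⟩ := exists_eq_zsmul_of_crossZ_eq_zero hv hcross
  have hc0 : (c : ℝ) ≠ 0 := by
    rintro hc0
    exact he (by simp [Int.cast_eq_zero.mp hc0])
  rw [toR2_zsmul, sameRay_smul_left_iff_of_ne hv0 hc0] at h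
  exact ⟨c, by exact_mod_cast h, rfl⟩

lemma toR2_mem_leftHalfPlane {v q : Z2} :
    toR2 q ∈ leftHalfPlane (toR2 v) ↔ 0 ≤ crossZ v q := by
  simp only [leftHalfPlane, Set.mem_ofPred_eq, toR2, crossZ]; norm_cast

lemma toR2_mem_lineL0 {v q : Z2} : toR2 q ∈ lineL0 v ↔ crossZ v q = -1 := by
  simp only [lineL0, Set.mem_ofPred_eq, toR2, crossZ]; norm_cast

lemma toR2_mem_blockOn {v z p : Z2} {m : ℕ} :
    toR2 p ∈ blockOn v z m ↔ ∃ k : ℕ, k < m ∧ z + (k : ℤ) • v = p := by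
  simp only [blockOn, Set.mem_image, Set.mem_ofPred_eq, toR2_injective.eq_iff]

lemma toR2_preimage_singleton (p : Z2) : toR2 ⁻¹' {toR2 p} = {p} := by
  ext q
  simp [toR2_injective.eq_iff]

lemma codes_iff_codesZ {A : Type*} {X : Set (Config A)} {S S' : Set (ℝ × ℝ)} :
    Codes X S S' ↔ CodesZ X (toR2 ⁻¹' S) (toR2 ⁻¹' S') :=
  Iff.rfl

namespace CodesZ

variable {A : Type*} {X : Set (Config A)} {S S' T : Set Z2}

lemma mono_left (h : CodesZ X S S') (hST : S ⊆ T) : CodesZ X T S' :=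
  fun x hx x' hx' hT => h x hx x' hx' fun p hp => hT p (hST hp)

lemma vadd (hX : ∀ u, ∀ x ∈ X, shiftAct u x ∈ X) (h : CodesZ X S S') (u : Z2) :
    CodesZ X (u +ᵥ S) (u +ᵥ S') := by
  intro x hx x' hx' hS p hp
  rw [Set.mem_vadd_set_iff_neg_vadd_mem] at hp
  have := h _ (hX u x hx) _ (hX u x' hx')
    (fun q hq => hS (u + q) (Set.vadd_mem_vadd_set hq)) _ hp
  simpa [shiftAct] using this

end CodesZ

namespace IntPolygon

variable (P : IntPolygon)

lemma crossZ_edgeVec_edgeVec_add_one_pos (i : Fin (P.n + 3)) :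
    0 < crossZ (P.edgeVec i) (P.edgeVec (i + 1)) := by
  have hi1 : i ≠ i + 1 := by simp
  have hi2 : i ≠ i + 1 + 1 := by
    rw [add_assoc, Ne, eq_comm, add_eq_left, Fin.ext_iff]
    simp [Fin.val_add, Nat.mod_eq_of_lt (show 2 < P.n + 3 by omega)]
  have h := P.convex (i + 1) i hi1 hi2
  rw [show P.vert i - P.vert (i + 1) = -P.edgeVec i from (neg_sub _ _).symm,
    crossZ_neg_right, ← crossZ_comm] at h
  exact h

lemma edgeVec_ne_zero (i : Fin (P.n + 3)) : P.edgeVec i ≠ 0 := by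
  intro h
  simpa [h, crossZ_zero_left] using P.crossZ_edgeVec_edgeVec_add_one_pos i

lemma crossZ_edgeVec_sub_vert_nonneg (j : Fin (P.n + 3)) {q : Z2} (hq : toR2 q ∈ P.carrier) :
    0 ≤ crossZ (P.edgeVec j) (q - P.vert j) := by
  set E := toR2 (P.edgeVec j)
  have hlin : IsLinearMap ℝ (crossR E) :=
    ⟨fun a b => by simp only [crossR, Prod.fst_add, Prod.snd_add]; ring,
     fun t a => by simp only [crossR, Prod.smul_fst, Prod.smul_snd, smul_eq_mul]; ring⟩
  have hcross (p : Z2) : (crossZ (P.edgeVec j) (p - P.vert j) : ℝ) =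
      crossR E (toR2 p) - crossR E (toR2 (P.vert j)) := by
    rw [← crossR_toR2, toR2_sub]
    simp only [E, crossR, Prod.fst_sub, Prod.snd_sub]; ring
  have hvert : Set.range (fun k => toR2 (P.vert k)) ⊆
      {w | crossR E (toR2 (P.vert j)) ≤ crossR E w} := by
    rintro _ ⟨k, rfl⟩
    have hk : 0 ≤ crossZ (P.edgeVec j) (P.vert k - P.vert j) := by
      by_cases hkj : k = j
      · simp [hkj, crossZ]
      by_cases hkj1 : k = j + 1
      · subst hkj1
        exact (crossZ_self (P.edgeVec j)).ge
      exact (P.convex j k hkj hkj1).le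
    have hkR : (0 : ℝ) ≤ crossZ (P.edgeVec j) (P.vert k - P.vert j) := by exact_mod_cast hk
    simp only [Set.mem_ofPred_eq]
    linarith [hcross (P.vert k)]
  have hq' := convexHull_min hvert (convex_halfSpace_ge hlin _) hq
  simp only [Set.mem_ofPred_eq] at hq'
  exact_mod_cast (show (0 : ℝ) ≤ crossZ (P.edgeVec j) (q - P.vert j) by linarith [hcross q])

lemma exists_mem_Icc_of_crossZ_eq_zero {i : Fin (P.n + 3)} {v : Z2} {c : ℤ}
    (hv : Int.gcd v.1 v.2 = 1) (hc : 0 < c) (hedge : P.edgeVec i = c • v) {q : Z2}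
    (hq : toR2 q ∈ P.carrier) (h0 : crossZ v (q - P.vert i) = 0) :
    ∃ k ∈ Set.Icc 0 c, q - P.vert i = k • v := by
  obtain ⟨k, hk⟩ := exists_eq_zsmul_of_crossZ_eq_zero hv h0
  refine ⟨k, ⟨?_, ?_⟩, hk⟩
  · have hturn := P.crossZ_edgeVec_edgeVec_add_one_pos (i - 1)
    rw [sub_add_cancel, hedge, crossZ_zsmul_right] at hturn
    have hside := P.crossZ_edgeVec_sub_vert_nonneg (i - 1) hq
    have hdiff : q - P.vert (i - 1) = k • v + P.edgeVec (i - 1) := by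
      rw [← hk, edgeVec, sub_add_cancel]; abel
    rw [hdiff, crossZ_add_right, crossZ_zsmul_right, crossZ_self, add_zero] at hside
    nlinarith
  · have hturn := P.crossZ_edgeVec_edgeVec_add_one_pos i
    rw [hedge, crossZ_zsmul_left] at hturn
    have hside := P.crossZ_edgeVec_sub_vert_nonneg (i + 1) hq
    have hdiff : q - P.vert (i + 1) = (k - c) • v := by
      rw [sub_smul, ← hk, ← hedge, edgeVec]; abel
    rw [hdiff, crossZ_zsmul_right, crossZ_comm] at hside
    nlinarith

end IntPolygon

theorem codesZ_of_vert_on_edge {A : Type*} {X : Set (Config A)}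
    (hX : ∀ u, ∀ x ∈ X, shiftAct u x ∈ X) {P : IntPolygon} (hP : IsCodingPolygon X P)
    {v : Z2} (hv : Int.gcd v.1 v.2 = 1) {i j : Fin (P.n + 3)} {a c : ℤ} (hc : 0 < c)
    (hedge : P.edgeVec i = c • v) (hj : P.vert j = P.vert i + a • v) {p : Z2}
    (hp : crossZ v p = -1) :
    CodesZ X ({q | 0 ≤ crossZ v q} ∪
      (fun k : ℤ => p + k • v) '' {k | -a ≤ k ∧ k ≤ c - a ∧ k ≠ 0}) {p} := by
  have hcode : CodesZ X (toR2 ⁻¹' P.carrier \ {P.vert j}) {P.vert j} := by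
    simpa only [codes_iff_codesZ, Set.preimage_sdiff, toR2_preimage_singleton] using hP j
  have hcode' := hcode.vadd hX (p - P.vert j)
  rw [Set.vadd_set_singleton, vadd_eq_add, sub_add_cancel] at hcode'
  refine hcode'.mono_left ?_
  rintro _ ⟨r, ⟨hrP, hrj⟩, rfl⟩
  have hq : (p - P.vert j) +ᵥ r = p + ((r - P.vert i) - a • v) := by
    rw [vadd_eq_add, hj]; abel
  simp only [hq]
  by_cases hH : 0 ≤ crossZ v (p + ((r - P.vert i) - a • v))
  · exact Or.inl hH
  right
  rw [crossZ_add_right, crossZ_sub_right, crossZ_zsmul_right, crossZ_self, hp] at hH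
  have hside := P.crossZ_edgeVec_sub_vert_nonneg i hrP
  rw [hedge, crossZ_zsmul_left] at hside
  obtain ⟨k, ⟨hk0, hkc⟩, hk⟩ :=
    P.exists_mem_Icc_of_crossZ_eq_zero hv hc hedge hrP (by nlinarith)
  refine ⟨k - a, ⟨by omega, by omega, ?_⟩, by simp only [hk, sub_smul]⟩
  rintro hka
  apply hrj
  rw [Set.mem_singleton_iff, hj, ← sub_eq_iff_eq_add', hk, sub_eq_zero.mp hka]

theorem forall_of_Ico_of_extend {Q : ℤ → Prop} {c m : ℤ} (hcm : c ≤ m)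
    (hbase : ∀ k, 0 ≤ k → k < m → Q k)
    (hleft : ∀ k, (∀ j, 1 ≤ j → j ≤ c → Q (k + j)) → Q k)
    (hright : ∀ k, (∀ j, -c ≤ j → j ≤ -1 → Q (k + j)) → Q k) : ∀ k, Q k := by
  suffices h : ∀ n : ℕ, ∀ k, -(n : ℤ) ≤ k → k < m + n → Q k from
    fun k => h (k.natAbs + m.natAbs + 1) k (by omega) (by omega)
  intro n
  induction n with
  | zero => exact fun k h0 hm => hbase k (by simpa using h0) (by simpa using hm)
  | succ n ih =>
    intro k hk hkm
    push_cast at hk hkm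
    by_cases hmid : -(n : ℤ) ≤ k ∧ k < m + n
    · exact ih k hmid.1 hmid.2
    by_cases hk' : k < -(n : ℤ)
    · exact hleft k fun j _ _ => ih _ (by omega) (by omega)
    · exact hright k fun j _ _ => ih _ (by omega) (by omega)

theorem statement6_general {A : Type} (X : Set (Config A))
    (hX : IsSubshift X) (P : IntPolygon) (hP : Polygonal X P)
    (v : Z2) (hprim : Int.gcd v.1 v.2 = 1)
    (hpar : ∃ i : Fin (P.n + 3), SameRay ℝ (toR2 (P.edgeVec i)) (toR2 v)) :
    ClosingRay X v := by
  obtain ⟨i, hi⟩ := hpar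
  obtain ⟨c, hc, hedge⟩ := exists_pos_zsmul_of_sameRay hprim (P.edgeVec_ne_zero i) hi
  refine ⟨c.toNat, fun z hz m hm x hx x' hx' hagree p hp => ?_⟩
  have hline (k : ℤ) : crossZ v (z + k • v) = -1 := by
    rw [crossZ_add_right, crossZ_zsmul_right, crossZ_self, mul_zero, add_zero]; exact hz
  have step (j : Fin (P.n + 3)) (a : ℤ) (hj : P.vert j = P.vert i + a • v) (k : ℤ)
      (hk : ∀ l, -a ≤ l → l ≤ c - a → l ≠ 0 →
        x (z + (k + l) • v) = x' (z + (k + l) • v)) :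
      x (z + k • v) = x' (z + k • v) := by
    refine codesZ_of_vert_on_edge hX.2 hP.2 hprim hc hedge hj (hline k) x hx x' hx' ?_ _ rfl
    rintro q (hq | ⟨l, ⟨hl₁, hl₂, hl₃⟩, rfl⟩)
    · exact hagree q (Or.inl (toR2_mem_leftHalfPlane.mpr hq))
    · simpa only [add_smul, add_assoc] using hk l hl₁ hl₂ hl₃
  obtain ⟨k, rfl⟩ : ∃ k : ℤ, p = z + k • v := by
    have hpz : crossZ v (p - z) = 0 := by
      rw [crossZ_sub_right, toR2_mem_lineL0.mp hp, show crossZ v z = -1 from hz, sub_self]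
    obtain ⟨k, hk⟩ := exists_eq_zsmul_of_crossZ_eq_zero hprim hpz
    exact ⟨k, by rw [← hk, add_sub_cancel]⟩
  refine forall_of_Ico_of_extend (Q := fun k => x (z + k • v) = x' (z + k • v))
    (c := c) (m := m) (by omega) (fun k hk0 hkm => ?_)
    (fun k hk => step i 0 (by rw [zero_smul, add_zero]) k
      fun l _ _ _ => hk l (by omega) (by omega))
    (fun k hk => step (i + 1) c (by rw [← hedge, IntPolygon.edgeVec, add_sub_cancel]) k
      fun l _ _ _ => hk l (by omega) (by omega)) k
  exact hagree _
    (Or.inr (toR2_mem_blockOn.mpr ⟨k.toNat, by omega, by rw [Int.toNat_of_nonneg hk0]⟩))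

/-- if `X` is polygonal with coding polygon `P` and the nonexpansive ray
directed by the primitive vector `v` is positively parallel to an oriented edge of `P`,
then this ray is closing for `X`. -/
theorem statement6 {A : Type} [Fintype A] [Nonempty A] (X : Set (Config A))
    (hX : IsSubshift X) (P : IntPolygon) (hP : Polygonal X P)
    (v : Z2) (hprim : Int.gcd v.1 v.2 = 1)
    (hne : ¬ ExpansiveRay X (toR2 v))
    (hpar : ∃ i : Fin (P.n + 3), SameRay ℝ (toR2 (P.edgeVec i)) (toR2 v)) :
    ClosingRay X v :=
  statement6_general X hX P hP v hprim hpar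

end PolygonalShifts
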